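/- arXiv:1006.4465 — 3 statements merged into one kernel-verified Lean document; each statement's English description precedes it below -/
import Mathlib

section
/- Let (S_n) be real random variables with S_n → ∞ almost surely and θ > 0 such that E[e^{-θ S_n}] → q ∈ (0, ∞). Then for every φ > θ, E[e^{-φ S_n}] → ∞ as n → ∞. -/
/-!
For `x ≤ -K` we have `e^{-θx} ≤ e^{-(φ-θ)K} e^{-φx}`, and for `x > -K` we have `e^{-θx} < e^{θK}`.
Since `S_n → ∞` a.s., bounded convergence makes the contribution of `{S_n > -K}` to `E[e^{-θ S_n}]`
vanish, so `q ≤ e^{-(φ-θ)K} liminf E[e^{-φ S_n}]` for every `K`.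
-/

open MeasureTheory Real Filter Topology
open scoped ENNReal NNReal

lemma exists_exp_neg_mul_le_mul_add_min {θ φ c : ℝ} (hθ : 0 ≤ θ) (hθφ : θ < φ) (hc : 0 < c) :
    ∃ C : ℝ, ∀ x : ℝ, exp (-θ * x) ≤ c * exp (-φ * x) + min (exp (-θ * x)) C := by
  set K := log c / (φ - θ)
  have hcK : c = exp ((φ - θ) * K) := by
    rw [mul_div_cancel₀ _ (sub_pos.2 hθφ).ne', exp_log hc]
  refine ⟨exp (-θ * K), fun x => ?_⟩
  rcases le_or_gt x K with hxK | hKx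
  · have hle : exp (-θ * x) ≤ c * exp (-φ * x) := by
      rw [hcK, ← exp_add]
      exact exp_le_exp.2 (by nlinarith)
    have hmin : 0 ≤ min (exp (-θ * x)) (exp (-θ * K)) := le_min (exp_pos _).le (exp_pos _).le
    linarith
  · rw [min_eq_left (exp_le_exp.2 (by nlinarith))]
    have := mul_pos hc (exp_pos (-φ * x))
    linarith

lemma tendsto_lintegral_ofReal_min_of_tendsto_zero {Ω : Type*} [MeasurableSpace Ω]
    {μ : Measure Ω} [IsFiniteMeasure μ] {f : ℕ → Ω → ℝ} (hf : ∀ n, AEMeasurable (f n) μ)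
    (hlim : ∀ᵐ ω ∂μ, Tendsto (fun n => f n ω) atTop (𝓝 0)) (C : ℝ) :
    Tendsto (fun n => ∫⁻ ω, ENNReal.ofReal (min (f n ω) C) ∂μ) atTop (𝓝 0) := by
  have hdom := tendsto_lintegral_of_dominated_convergence' (μ := μ) (f := fun _ => 0)
    (fun _ => ENNReal.ofReal C) (fun n => ((hf n).min aemeasurable_const).ennreal_ofReal)
    (fun n => ae_of_all _ fun ω => ENNReal.ofReal_le_ofReal (min_le_right _ _))
    (by simp [lintegral_const, ENNReal.mul_eq_top])
    (hlim.mono fun ω hω => by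
      simpa [ENNReal.ofReal_eq_zero.2 (min_le_left 0 C)]
        using ENNReal.tendsto_ofReal (hω.min tendsto_const_nhds))
  simpa using hdom

lemma ENNReal.tendsto_nhds_top_of_forall_le_mul_add {ι : Type*} {l : Filter ι} {a x : ι → ℝ≥0∞}
    {q : ℝ≥0∞} (hq : q ≠ 0) (ha : Tendsto a l (𝓝 q))
    (hle : ∀ c : ℝ≥0, 0 < c → ∃ b : ι → ℝ≥0∞, Tendsto b l (𝓝 0) ∧ ∀ i, a i ≤ c * x i + b i) :
    Tendsto x l (𝓝 ∞) := by
  rw [ENNReal.tendsto_nhds_top_iff_nnreal]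
  intro M
  obtain ⟨c, hc, hcM⟩ := ENNReal.exists_nnreal_pos_mul_lt ENNReal.coe_ne_top hq
  obtain ⟨b, hb, hab⟩ := hle c hc
  have hsub : Tendsto (fun i => a i - b i) l (𝓝 q) := by
    simpa using ENNReal.Tendsto.sub ha hb (Or.inr ENNReal.zero_ne_top)
  filter_upwards [hsub.eventually (lt_mem_nhds hcM)] with i hi
  have : (c : ℝ≥0∞) * M < c * x i := hi.trans_le (tsub_le_iff_right.2 (hab i))
  exact lt_of_mul_lt_mul_left' this

theorem expectation_tendsto_top_of_gt_theta
    {Ω : Type*} [MeasurableSpace Ω] {μ : Measure Ω} [IsProbabilityMeasure μ]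
    (S : ℕ → Ω → ℝ) (hSmeas : ∀ n, Measurable (S n))
    (hS : ∀ᵐ ω ∂μ, Tendsto (fun n => S n ω) atTop atTop)
    (θ : ℝ) (hθ : 0 < θ) (q : ℝ) (hq : 0 < q)
    (hintθ : ∀ n, Integrable (fun ω => exp (-θ * S n ω)) μ)
    (hlim : Tendsto (fun n => ∫ ω, exp (-θ * S n ω) ∂μ) atTop (𝓝 q)) :
    ∀ φ : ℝ, θ < φ →
      Tendsto (fun n => ∫⁻ ω, ENNReal.ofReal (exp (-φ * S n ω)) ∂μ)
        atTop (𝓝 ⊤) := by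
  intro φ hφ
  have hlim' : Tendsto (fun n => ∫⁻ ω, ENNReal.ofReal (exp (-θ * S n ω)) ∂μ) atTop
      (𝓝 (ENNReal.ofReal q)) :=
    (ENNReal.tendsto_ofReal hlim).congr fun n => ofReal_integral_eq_lintegral_ofReal (hintθ n)
      (ae_of_all _ fun _ => (exp_pos _).le)
  have hexp : ∀ᵐ ω ∂μ, Tendsto (fun n => exp (-θ * S n ω)) atTop (𝓝 0) :=
    hS.mono fun ω hω => tendsto_exp_atBot.comp
      ((tendsto_const_mul_atBot_of_neg (neg_lt_zero.2 hθ)).2 hω)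
  refine ENNReal.tendsto_nhds_top_of_forall_le_mul_add (ENNReal.ofReal_pos.2 hq).ne' hlim'
    fun c hc => ?_
  obtain ⟨C, hC⟩ := exists_exp_neg_mul_le_mul_add_min hθ.le hφ (NNReal.coe_pos.2 hc)
  have hmeas : ∀ n, AEMeasurable (fun ω => exp (-θ * S n ω)) μ :=
    fun n => ((hSmeas n).const_mul _).exp.aemeasurable
  refine ⟨_, tendsto_lintegral_ofReal_min_of_tendsto_zero hmeas hexp C, fun n => ?_⟩
  calc ∫⁻ ω, ENNReal.ofReal (exp (-θ * S n ω)) ∂μ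
      ≤ ∫⁻ ω, (c * ENNReal.ofReal (exp (-φ * S n ω))
          + ENNReal.ofReal (min (exp (-θ * S n ω)) C)) ∂μ := by
        refine lintegral_mono fun ω => (ENNReal.ofReal_le_ofReal (hC (S n ω))).trans ?_
        rw [← ENNReal.ofReal_coe_nnreal, ← ENNReal.ofReal_mul c.coe_nonneg]
        exact ENNReal.ofReal_add_le
    _ = c * ∫⁻ ω, ENNReal.ofReal (exp (-φ * S n ω)) ∂μ
          + ∫⁻ ω, ENNReal.ofReal (min (exp (-θ * S n ω)) C) ∂μ := by
        rw [lintegral_add_right' _ ((hmeas n).min aemeasurable_const).ennreal_ofReal,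
          lintegral_const_mul' _ _ ENNReal.coe_ne_top]
end

section
/- Let (S_n) be real random variables with S_n → ∞ almost surely. Then there exists at most one θ > 0 such that lim_{n→∞} E[e^{-θ S_n}] exists and lies in (0, ∞). -/
/-!
If `θ₁ < θ₂` then `exp (-θ₁ S) = X ^ p` with `X = exp (-θ₂ S)` and `p = θ₁ / θ₂ < 1`. Here
`X_n → 0` almost surely while `E[X_n]` stays bounded, and this forces `E[X_n ^ p] → 0`: truncating
at a level `M` gives `x ^ p ≤ min x M ^ p + M ^ (p - 1) * x`, where the truncated part tends to `0`
by dominated convergence and the tail is at most `M ^ (p - 1) * sup E[X_n]`, small for large `M`.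
So the limit for `θ₁` would be `0`, not positive.
-/

open MeasureTheory Real Filter Topology

lemma rpow_le_min_rpow_add_rpow_mul {x M p : ℝ} (hx : 0 ≤ x) (hM : 0 < M) (hp : p ≤ 1) :
    x ^ p ≤ min x M ^ p + M ^ (p - 1) * x := by
  rcases le_or_gt x M with hxM | hMx
  · rw [min_eq_left hxM]
    exact le_add_of_nonneg_right (by positivity)
  · have hx' : 0 < x := hM.trans hMx
    calc x ^ p = x ^ (p - 1) * x := by rw [← rpow_add_one hx'.ne', sub_add_cancel]
      _ ≤ M ^ (p - 1) * x :=
          mul_le_mul_of_nonneg_right (rpow_le_rpow_of_nonpos hM hMx.le (by linarith)) hx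
      _ ≤ min x M ^ p + M ^ (p - 1) * x := le_add_of_nonneg_left (by positivity)

lemma norm_min_rpow_le {x M p : ℝ} (hx : 0 ≤ x) (hM : 0 ≤ M) (hp : 0 ≤ p) :
    ‖min x M ^ p‖ ≤ M ^ p := by
  have hmin : 0 ≤ min x M := le_min hx hM
  rw [norm_of_nonneg (rpow_nonneg hmin p)]
  exact rpow_le_rpow hmin (min_le_right x M) hp

section Truncation

variable {Ω : Type*} [MeasurableSpace Ω] {μ : Measure Ω} [IsFiniteMeasure μ]
  {X : ℕ → Ω → ℝ} {p : ℝ}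

lemma integrable_min_rpow {f : Ω → ℝ} (hf0 : ∀ ω, 0 ≤ f ω) (hf : AEStronglyMeasurable f μ)
    {M : ℝ} (hM : 0 ≤ M) (hp : 0 ≤ p) :
    Integrable (fun ω => min (f ω) M ^ p) μ :=
  (integrable_const (M ^ p)).mono' (by fun_prop)
    (ae_of_all _ fun ω => norm_min_rpow_le (hf0 ω) hM hp)

lemma tendsto_integral_min_rpow_zero (hp : 0 < p) (hX0 : ∀ n ω, 0 ≤ X n ω)
    (hXm : ∀ n, AEStronglyMeasurable (X n) μ)
    (hlim : ∀ᵐ ω ∂μ, Tendsto (fun n => X n ω) atTop (𝓝 0)) {M : ℝ} (hM : 0 ≤ M) :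
    Tendsto (fun n => ∫ ω, min (X n ω) M ^ p ∂μ) atTop (𝓝 0) := by
  have hdom := tendsto_integral_of_dominated_convergence (fun _ => M ^ p)
    (fun n => (integrable_min_rpow (hX0 n) (hXm n) hM hp.le).aestronglyMeasurable)
    (integrable_const _) (fun n => ae_of_all _ fun ω => norm_min_rpow_le (hX0 n ω) hM hp.le)
    (F := fun n ω => min (X n ω) M ^ p) (f := fun _ => 0) <| by
      filter_upwards [hlim] with ω hω
      have hmin : Tendsto (fun n => min (X n ω) M) atTop (𝓝 0) := by
        simpa [min_eq_left hM] using hω.min (tendsto_const_nhds (x := M))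
      simpa [zero_rpow hp.ne'] using hmin.rpow_const (Or.inr hp.le)
  simpa using hdom

lemma tendsto_integral_rpow_zero_of_tendsto_ae_zero (hp0 : 0 < p) (hp1 : p < 1)
    (hX0 : ∀ n ω, 0 ≤ X n ω) (hXi : ∀ n, Integrable (X n) μ)
    (hbdd : IsBoundedUnder (· ≤ ·) atTop fun n => ∫ ω, X n ω ∂μ)
    (hlim : ∀ᵐ ω ∂μ, Tendsto (fun n => X n ω) atTop (𝓝 0)) :
    Tendsto (fun n => ∫ ω, X n ω ^ p ∂μ) atTop (𝓝 0) := by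
  obtain ⟨C, hC⟩ := hbdd
  rw [eventually_map] at hC
  refine tendsto_order.2 ⟨fun a ha => Eventually.of_forall fun n =>
    ha.trans_le (integral_nonneg fun ω => rpow_nonneg (hX0 n ω) p), fun ε hε => ?_⟩
  have htail : Tendsto (fun M : ℝ => M ^ (p - 1) * C) atTop (𝓝 0) := by
    simpa using (tendsto_rpow_neg_atTop (by linarith : 0 < 1 - p)).mul_const C
  obtain ⟨M, hM, hMC⟩ :=
    ((eventually_gt_atTop 0).and (htail.eventually_lt_const (half_pos hε))).exists
  have hXm n := (hXi n).aestronglyMeasurable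
  filter_upwards [(tendsto_integral_min_rpow_zero hp0 hX0 hXm hlim hM.le).eventually_lt_const
    (half_pos hε), hC] with n hmin hCn
  have hmin_int := integrable_min_rpow (hX0 n) (hXm n) hM.le hp0.le
  calc ∫ ω, X n ω ^ p ∂μ
      ≤ ∫ ω, (min (X n ω) M ^ p + M ^ (p - 1) * X n ω) ∂μ :=
        integral_mono_of_nonneg (ae_of_all _ fun ω => rpow_nonneg (hX0 n ω) p)
          (hmin_int.add ((hXi n).const_mul _))
          (ae_of_all _ fun ω => rpow_le_min_rpow_add_rpow_mul (hX0 n ω) hM hp1.le)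
    _ = ∫ ω, min (X n ω) M ^ p ∂μ + M ^ (p - 1) * ∫ ω, X n ω ∂μ := by
        rw [integral_add hmin_int ((hXi n).const_mul _), integral_const_mul]
    _ ≤ ∫ ω, min (X n ω) M ^ p ∂μ + M ^ (p - 1) * C := by gcongr
    _ < ε / 2 + ε / 2 := add_lt_add hmin hMC
    _ = ε := add_halves ε

end Truncation

lemma tendsto_integral_exp_neg_mul_zero {Ω : Type*} [MeasurableSpace Ω] {μ : Measure Ω}
    [IsFiniteMeasure μ] {S : ℕ → Ω → ℝ} (hS : ∀ᵐ ω ∂μ, Tendsto (fun n => S n ω) atTop atTop)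
    {θ₁ θ₂ : ℝ} (hθ₁ : 0 < θ₁) (hθ : θ₁ < θ₂)
    (hint₂ : ∀ n, Integrable (fun ω => exp (-θ₂ * S n ω)) μ)
    (hbdd₂ : IsBoundedUnder (· ≤ ·) atTop fun n => ∫ ω, exp (-θ₂ * S n ω) ∂μ) :
    Tendsto (fun n => ∫ ω, exp (-θ₁ * S n ω) ∂μ) atTop (𝓝 0) := by
  have hθ₂ : 0 < θ₂ := hθ₁.trans hθ
  have hpow : ∀ s, exp (-θ₁ * s) = exp (-θ₂ * s) ^ (θ₁ / θ₂) := fun s => by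
    rw [← exp_mul]
    field_simp
  simp_rw [hpow]
  refine tendsto_integral_rpow_zero_of_tendsto_ae_zero (div_pos hθ₁ hθ₂)
    ((div_lt_one hθ₂).2 hθ) (fun n ω => (exp_pos _).le) hint₂ hbdd₂ ?_
  filter_upwards [hS] with ω hω
  exact tendsto_exp_atBot.comp ((tendsto_const_mul_atBot_of_neg (neg_lt_zero.2 hθ₂)).2 hω)

theorem theta_unique_assumption_one_general
    {Ω : Type*} [MeasurableSpace Ω] {μ : Measure Ω} [IsProbabilityMeasure μ]
    (S : ℕ → Ω → ℝ)
    (hS : ∀ᵐ ω ∂μ, Tendsto (fun n => S n ω) atTop atTop)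
    (θ₁ θ₂ : ℝ) (hθ₁ : 0 < θ₁) (hθ₂ : 0 < θ₂)
    (q₁ q₂ : ℝ) (hq₁ : 0 < q₁) (hq₂ : 0 < q₂)
    (hint₁ : ∀ n, Integrable (fun ω => exp (-θ₁ * S n ω)) μ)
    (hint₂ : ∀ n, Integrable (fun ω => exp (-θ₂ * S n ω)) μ)
    (hlim₁ : Tendsto (fun n => ∫ ω, exp (-θ₁ * S n ω) ∂μ) atTop (𝓝 q₁))
    (hlim₂ : Tendsto (fun n => ∫ ω, exp (-θ₂ * S n ω) ∂μ) atTop (𝓝 q₂)) :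
    θ₁ = θ₂ := by
  rcases lt_trichotomy θ₁ θ₂ with h | h | h
  · have h0 := tendsto_integral_exp_neg_mul_zero hS hθ₁ h hint₂ hlim₂.isBoundedUnder_le
    exact absurd (tendsto_nhds_unique hlim₁ h0) hq₁.ne'
  · exact h
  · have h0 := tendsto_integral_exp_neg_mul_zero hS hθ₂ h hint₁ hlim₁.isBoundedUnder_le
    exact absurd (tendsto_nhds_unique hlim₂ h0) hq₂.ne'

theorem theta_unique_assumption_one
    {Ω : Type*} [MeasurableSpace Ω] {μ : Measure Ω} [IsProbabilityMeasure μ]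
    (S : ℕ → Ω → ℝ) (hSmeas : ∀ n, Measurable (S n))
    (hS : ∀ᵐ ω ∂μ, Tendsto (fun n => S n ω) atTop atTop)
    (θ₁ θ₂ : ℝ) (hθ₁ : 0 < θ₁) (hθ₂ : 0 < θ₂)
    (q₁ q₂ : ℝ) (hq₁ : 0 < q₁) (hq₂ : 0 < q₂)
    (hint₁ : ∀ n, Integrable (fun ω => exp (-θ₁ * S n ω)) μ)
    (hint₂ : ∀ n, Integrable (fun ω => exp (-θ₂ * S n ω)) μ)
    (hlim₁ : Tendsto (fun n => ∫ ω, exp (-θ₁ * S n ω) ∂μ) atTop (𝓝 q₁))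
    (hlim₂ : Tendsto (fun n => ∫ ω, exp (-θ₂ * S n ω) ∂μ) atTop (𝓝 q₂)) :
    θ₁ = θ₂ :=
  theta_unique_assumption_one_general S hS θ₁ θ₂ hθ₁ hθ₂ q₁ q₂ hq₁ hq₂ hint₁ hint₂ hlim₁ hlim₂
end

section
/- Let (Ω, F) be a measurable space and (P_n) a sequence of probability measures on F such that P(A) := lim_{n→∞} P_n(A) exists for every A ∈ F. Then P is a probability measure on (Ω, F). -/
/-!
Finite additivity of `L` passes to the limit, and `L ≤ 1`, so `L` is a finite additive content on
the measurable sets; it is σ-additive as soon as `L (s k) → 0` along every decreasing sequence with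
empty intersection. This follows from the uniform absolute continuity of the `P n` with respect to
`μ = ∑ 2⁻ⁿ P n` (Vitali–Hahn–Saks). Measurable sets with the distance `μ (s ∆ t)` form a complete
space on which every `P n` is Lipschitz. By Baire's theorem, some ball `B(t, r)` carries
`|P n - P N| ≤ ε` for all `n ≥ N`; writing `P n s = P n (t ∪ s) - P n (t \ s)` for `μ s < r` then
bounds `P n s` by `P N s + 2ε` uniformly in `n ≥ N`, while the finitely many `n ≤ N` are small
near `∅` by continuity.
-/

open MeasureTheory Filter Topology Set
open scoped symmDiff ENNReal NNReal

theorem Set.symmDiff_limsup_subset {α : Type*} (s : ℕ → Set α) (N : ℕ) :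
    s N ∆ limsup s atTop ⊆ ⋃ k ≥ N, s k ∆ s (k + 1) := by
  intro x hx
  by_contra hx'
  simp only [mem_iUnion, exists_prop, not_exists, not_and, mem_symmDiff] at hx'
  have hconst : ∀ n ≥ N, (x ∈ s n ↔ x ∈ s N) := by
    intro n hn
    induction n, hn using Nat.le_induction with
    | base => rfl
    | succ n hn ih => have := hx' n hn; tauto
  have hfreq : (∃ᶠ n in atTop, x ∈ s n) ↔ x ∈ s N := by
    refine frequently_atTop.trans ⟨fun h ↦ ?_, fun h a ↦ ?_⟩
    · obtain ⟨n, hn, hxn⟩ := h N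
      exact (hconst n hn).1 hxn
    · exact ⟨max a N, le_max_left a N, (hconst _ (le_max_right a N)).2 h⟩
  rw [mem_symmDiff, mem_limsup_iff_frequently_mem, hfreq] at hx
  tauto

theorem exists_isOpen_forall_dist_le_of_cauchySeq {X Y : Type*} [TopologicalSpace X]
    [BaireSpace X] [Nonempty X] [PseudoMetricSpace Y] {f : ℕ → X → Y}
    (hf : ∀ n, Continuous (f n)) (hcauchy : ∀ x, CauchySeq fun n ↦ f n x) {ε : ℝ} (hε : 0 < ε) :
    ∃ N, ∃ U : Set X, IsOpen U ∧ U.Nonempty ∧ ∀ x ∈ U, ∀ n ≥ N, dist (f n x) (f N x) ≤ ε := by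
  let F : ℕ → Set X := fun N ↦ {x | ∀ n ≥ N, dist (f n x) (f N x) ≤ ε}
  have hclosed N : IsClosed (F N) := by
    simp only [F, ofPred_forall]
    exact isClosed_biInter fun n _ ↦ isClosed_le ((hf n).dist (hf N)) continuous_const
  have hcover : ⋃ N, F N = univ := eq_univ_of_forall fun x ↦ by
    obtain ⟨N, hN⟩ := Metric.cauchySeq_iff'.1 (hcauchy x) ε hε
    exact mem_iUnion.2 ⟨N, fun n hn ↦ (hN n hn).le⟩
  obtain ⟨N, hN⟩ := nonempty_interior_of_iUnion_of_closed hclosed hcover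
  exact ⟨N, interior (F N), isOpen_interior, hN, fun x hx ↦ interior_subset hx⟩

namespace MeasureTheory

variable {α : Type*} [MeasurableSpace α]

theorem isSetRing_measurableSet : IsSetRing {s : Set α | MeasurableSet s} :=
  ⟨.empty, fun _ _ ↦ .union, fun _ _ ↦ .diff⟩

theorem measureReal_sub_measureReal_le (ν ν' : Measure α) [IsFiniteMeasure ν]
    [IsFiniteMeasure ν'] {s : Set α} (hs : MeasurableSet s) (t : Set α) :
    ν.real s - ν'.real s ≤
      dist (ν.real (t ∪ s)) (ν'.real (t ∪ s)) + dist (ν.real (t \ s)) (ν'.real (t \ s)) := by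
  have hsplit (ρ : Measure α) [IsFiniteMeasure ρ] :
      ρ.real (t ∪ s) = ρ.real (t \ s) + ρ.real s := by
    rw [← sdiff_union_self, measureReal_union disjoint_sdiff_left hs]
  rw [hsplit ν, hsplit ν', Real.dist_eq, Real.dist_eq]
  linarith [le_abs_self (ν.real (t \ s) + ν.real s - (ν'.real (t \ s) + ν'.real s)),
    neg_abs_le (ν.real (t \ s) - ν'.real (t \ s))]

namespace MeasuredSets

variable {μ ν : Measure α}

instance : EmptyCollection (MeasuredSets μ) := ⟨⟨∅, .empty⟩⟩
instance : Union (MeasuredSets μ) := ⟨fun s t ↦ ⟨s ∪ t, s.2.union t.2⟩⟩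
instance : SDiff (MeasuredSets μ) := ⟨fun s t ↦ ⟨s \ t, s.2.diff t.2⟩⟩
instance : Nonempty (MeasuredSets μ) := ⟨∅⟩

@[simp] theorem coe_empty : ((∅ : MeasuredSets μ) : Set α) = ∅ := rfl

@[simp] theorem coe_union (s t : MeasuredSets μ) :
    ((s ∪ t : MeasuredSets μ) : Set α) = (s : Set α) ∪ t := rfl

@[simp] theorem coe_sdiff (s t : MeasuredSets μ) :
    ((s \ t : MeasuredSets μ) : Set α) = (s : Set α) \ t := rfl

theorem measurableSet (s : MeasuredSets μ) : MeasurableSet (s : Set α) := s.2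

theorem edist_empty (s : MeasuredSets μ) : edist s ∅ = μ s := by
  rw [edist_def, coe_empty, ← bot_eq_empty, symmDiff_bot]

theorem edist_union_left_le (s t : MeasuredSets μ) : edist (t ∪ s) t ≤ μ s := by
  rw [edist_def, coe_union]
  exact measure_mono fun x ↦ by simp only [mem_symmDiff, mem_union]; tauto

theorem edist_sdiff_left_le (s t : MeasuredSets μ) : edist (t \ s) t ≤ μ s := by
  rw [edist_def, coe_sdiff]
  exact measure_mono fun x ↦ by simp only [mem_symmDiff, Set.mem_sdiff]; tauto

instance : CompleteSpace (MeasuredSets μ) := by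
  refine EMetric.complete_of_convergent_controlled_sequences (fun n ↦ 2⁻¹ ^ n)
    (fun n ↦ ENNReal.pow_pos (by norm_num) n) fun u hu ↦ ?_
  let A : MeasuredSets μ := ⟨limsup (fun n ↦ (u n : Set α)) atTop,
    MeasurableSet.measurableSet_limsup fun n ↦ (u n).measurableSet⟩
  have hdist N : edist (u N) A ≤ 2 * 2⁻¹ ^ N := calc
    edist (u N) A ≤ μ (⋃ k ≥ N, (u k : Set α) ∆ u (k + 1)) :=
      measure_mono (symmDiff_limsup_subset (fun n ↦ (u n : Set α)) N)
    _ ≤ ∑' k, μ ((u (k + N) : Set α) ∆ u (k + N + 1)) := by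
      rw [iUnion_ge_eq_iUnion_nat_add]
      exact measure_iUnion_le _
    _ ≤ ∑' k, 2⁻¹ ^ (k + N) :=
      ENNReal.tsum_le_tsum fun k ↦ (hu (k + N) _ _ le_rfl (Nat.le_succ _)).le
    _ = 2 * 2⁻¹ ^ N := by
      simp_rw [pow_add, ENNReal.tsum_mul_right, ENNReal.tsum_geometric_two]
  refine ⟨A, tendsto_iff_edist_tendsto_0.2 <| tendsto_of_tendsto_of_tendsto_of_le_of_le
    tendsto_const_nhds ?_ (fun _ ↦ zero_le) hdist⟩
  simpa using ENNReal.Tendsto.const_mul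
    (ENNReal.tendsto_pow_atTop_nhds_zero_of_lt_one (r := 2⁻¹) (by norm_num)) (Or.inr (by simp))

theorem lipschitzWith_measureReal_of_le_smul [IsFiniteMeasure ν] {c : ℝ≥0} (h : ν ≤ c • μ) :
    LipschitzWith c fun s : MeasuredSets μ ↦ ν.real s := by
  have hid : LipschitzWith (α := MeasuredSets μ) (β := MeasuredSets ν) c fun s ↦ ⟨s, s.2⟩ :=
    fun s t ↦ h _
  rw [← one_mul c]
  exact lipschitzWith_measureReal.comp hid

end MeasuredSets

namespace Measure

noncomputable def geometricMixture (P : ℕ → Measure α) : Measure α :=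
  sum fun n ↦ (2⁻¹ ^ n : ℝ≥0) • P n

theorem le_smul_geometricMixture (P : ℕ → Measure α) (n : ℕ) :
    P n ≤ (2 ^ n : ℝ≥0) • geometricMixture P := calc
  P n = (2 ^ n : ℝ≥0) • (2⁻¹ ^ n : ℝ≥0) • P n := by
    rw [smul_smul, ← mul_pow, mul_inv_cancel₀ two_ne_zero, one_pow, one_smul]
  _ ≤ (2 ^ n : ℝ≥0) • geometricMixture P := by gcongr; exact le_sum _ n

instance (P : ℕ → Measure α) [∀ n, IsProbabilityMeasure (P n)] :
    IsFiniteMeasure (geometricMixture P) := by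
  constructor
  simp only [geometricMixture, sum_apply _ MeasurableSet.univ, smul_apply, measure_univ,
    ENNReal.smul_def, smul_eq_mul, mul_one, ENNReal.coe_pow, ENNReal.coe_inv two_ne_zero,
    ENNReal.coe_ofNat, ENNReal.tsum_geometric_two]
  exact ENNReal.ofNat_lt_top

end Measure

theorem exists_pos_forall_measureReal_le_of_cauchySeq {μ : Measure α} {P : ℕ → Measure α}
    [∀ n, IsFiniteMeasure (P n)] (hcont : ∀ n, Continuous fun s : MeasuredSets μ ↦ (P n).real s)
    (hcauchy : ∀ s, MeasurableSet s → CauchySeq fun n ↦ (P n).real s) {ε : ℝ} (hε : 0 < ε) :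
    ∃ δ > 0, ∀ s, MeasurableSet s → μ s < δ → ∀ n, (P n).real s ≤ ε := by
  obtain ⟨N, U, hU, ⟨t, ht⟩, hclose⟩ := exists_isOpen_forall_dist_le_of_cauchySeq hcont
    (fun s : MeasuredSets μ ↦ hcauchy s s.measurableSet) (show 0 < ε / 3 by positivity)
  obtain ⟨r, hr, hball⟩ := EMetric.isOpen_iff.1 hU t ht
  have htail (s : MeasuredSets μ) (hs : μ s < r) (n : ℕ) (hn : N ≤ n) :
      (P n).real s ≤ (P N).real s + 2 * (ε / 3) := by
    have h₁ := hclose _ (hball ((MeasuredSets.edist_union_left_le s t).trans_lt hs)) n hn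
    have h₂ := hclose _ (hball ((MeasuredSets.edist_sdiff_left_le s t).trans_lt hs)) n hn
    rw [MeasuredSets.coe_union] at h₁
    rw [MeasuredSets.coe_sdiff] at h₂
    linarith [measureReal_sub_measureReal_le (P n) (P N) s.measurableSet t]
  have hhead : ∀ᶠ s : MeasuredSets μ in 𝓝 ∅, ∀ n ∈ Finset.range (N + 1), (P n).real s < ε / 3 :=
    (Finset.eventually_all _).2 fun n _ ↦
      ((hcont n).tendsto ∅).eventually_lt_const (by simpa using show 0 < ε / 3 by positivity)
  obtain ⟨δ, hδ, hδball⟩ := EMetric.mem_nhds_iff.1 (hhead.and (Metric.eball_mem_nhds ∅ hr))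
  suffices h : ∀ s : MeasuredSets μ, μ s < δ → ∀ n, (P n).real s ≤ ε from
    ⟨δ, hδ, fun s hs ↦ h ⟨s, hs⟩⟩
  intro s hμs n
  obtain ⟨hsmall, hsr⟩ := hδball (show s ∈ Metric.eball ∅ δ by
    rwa [Metric.mem_eball, MeasuredSets.edist_empty])
  rw [MeasuredSets.edist_empty] at hsr
  rcases le_or_gt n N with hn | hn
  · linarith [hsmall n (Finset.mem_range.2 (Nat.lt_succ_of_le hn))]
  · linarith [htail s hsr n hn.le, hsmall N (Finset.mem_range.2 N.lt_succ_self)]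

def IsSetwiseLimit (P : ℕ → Measure α) (L : Set α → ℝ≥0∞) : Prop :=
  ∀ s, MeasurableSet s → Tendsto (fun n ↦ P n s) atTop (𝓝 (L s))

namespace IsSetwiseLimit

variable {P : ℕ → Measure α} {L : Set α → ℝ≥0∞}

theorem apply_empty (hlim : IsSetwiseLimit P L) : L ∅ = 0 :=
  tendsto_nhds_unique (hlim ∅ .empty) (by simp)

theorem apply_univ [∀ n, IsProbabilityMeasure (P n)] (hlim : IsSetwiseLimit P L) : L univ = 1 :=
  tendsto_nhds_unique (hlim univ .univ) (by simp)

theorem apply_le_one [∀ n, IsProbabilityMeasure (P n)] (hlim : IsSetwiseLimit P L) {s : Set α}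
    (hs : MeasurableSet s) : L s ≤ 1 :=
  le_of_tendsto' (hlim s hs) fun _ ↦ prob_le_one

theorem apply_union (hlim : IsSetwiseLimit P L) {s t : Set α} (hs : MeasurableSet s)
    (ht : MeasurableSet t) (hst : Disjoint s t) : L (s ∪ t) = L s + L t :=
  tendsto_nhds_unique (hlim _ (hs.union ht)) <| by
    simpa only [measure_union hst ht] using (hlim s hs).add (hlim t ht)

theorem tendsto_zero_of_antitone [∀ n, IsProbabilityMeasure (P n)] (hlim : IsSetwiseLimit P L)
    {s : ℕ → Set α} (hs : ∀ k, MeasurableSet (s k)) (hanti : Antitone s)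
    (hempty : ⋂ k, s k = ∅) : Tendsto (fun k ↦ L (s k)) atTop (𝓝 0) := by
  let μ := Measure.geometricMixture P
  have hcont n : Continuous fun t : MeasuredSets μ ↦ (P n).real t :=
    (MeasuredSets.lipschitzWith_measureReal_of_le_smul
      (Measure.le_smul_geometricMixture P n)).continuous
  have hcauchy t (ht : MeasurableSet t) : CauchySeq fun n ↦ (P n).real t :=
    ((ENNReal.tendsto_toReal (ne_top_of_le_ne_top ENNReal.one_ne_top
      (hlim.apply_le_one ht))).comp (hlim t ht)).cauchySeq
  have hμ : Tendsto (fun k ↦ μ (s k)) atTop (𝓝 0) := by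
    have h := tendsto_measure_iInter_atTop (fun k ↦ (hs k).nullMeasurableSet) hanti
      ⟨0, measure_ne_top μ _⟩
    rwa [hempty, measure_empty] at h
  rw [ENNReal.tendsto_nhds_zero]
  intro ε hε
  obtain ⟨ε', -, hε'pos, hε'⟩ := ENNReal.lt_iff_exists_real_btwn.1 hε
  obtain ⟨δ, hδ, hsmall⟩ :=
    exists_pos_forall_measureReal_le_of_cauchySeq hcont hcauchy (ENNReal.ofReal_pos.1 hε'pos)
  filter_upwards [hμ.eventually_lt_const hδ] with k hk
  refine (le_of_tendsto' (hlim _ (hs k)) fun n ↦ ?_).trans hε'.le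
  rw [ENNReal.le_ofReal_iff_toReal_le (measure_ne_top _ _) (ENNReal.ofReal_pos.1 hε'pos).le]
  exact hsmall _ (hs k) hk n

theorem apply_iUnion [∀ n, IsProbabilityMeasure (P n)] (hlim : IsSetwiseLimit P L)
    {f : ℕ → Set α} (hf : ∀ i, MeasurableSet (f i))
    (hdisj : Pairwise (Function.onFun Disjoint f)) : L (⋃ i, f i) = ∑' i, L (f i) :=
  let m : AddContent ℝ≥0∞ {s : Set α | MeasurableSet s} :=
    isSetRing_measurableSet.addContent_of_union L hlim.apply_empty
      fun hs ht hst ↦ hlim.apply_union hs ht hst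
  addContent_iUnion_eq_sum_of_tendsto_zero isSetRing_measurableSet m
    (fun _ hs ↦ ne_top_of_le_ne_top ENNReal.one_ne_top (hlim.apply_le_one hs))
    (fun _ hs hanti hempty ↦ hlim.tendsto_zero_of_antitone hs hanti hempty) hf (.iUnion hf) hdisj

end IsSetwiseLimit

end MeasureTheory

theorem setwise_limit_is_probability_measure
    {Ω : Type*} [MeasurableSpace Ω]
    (P : ℕ → Measure Ω) (hP : ∀ n, IsProbabilityMeasure (P n))
    (L : Set Ω → ENNReal)
    (hlim : ∀ A : Set Ω, MeasurableSet A → Tendsto (fun n => P n A) atTop (𝓝 (L A))) :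
    ∃ Q : Measure Ω, IsProbabilityMeasure Q ∧
      ∀ A : Set Ω, MeasurableSet A → Q A = L A := by
  have hL : IsSetwiseLimit P L := hlim
  refine ⟨Measure.ofMeasurable (fun s _ ↦ L s) hL.apply_empty
    fun f hf hdisj ↦ hL.apply_iUnion hf hdisj, ⟨?_⟩, fun A hA ↦ Measure.ofMeasurable_apply A hA⟩
  rw [Measure.ofMeasurable_apply _ .univ]
  exact hL.apply_univ
end
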